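/- arXiv:0911.3474 — 2 statements merged into one kernel-verified Lean document; each statement's English description precedes it below -/
import Mathlib

section
/- Suppose ε ∈ (0,ρ) and η ∈ (0,1] are such that for every x, y ∈ B̄(a,ρ), μ({z : infDist(z, segment [x,y]) < ε}) ≤ 1 − η, and set τ = ε²·η/(32·ρ³). Then for all x, y ∈ B̄(a,ρ) and all t ∈ [0,1]: f(x + t·(y − x)) ≥ f(x) + t·(⟨y − x, H(x)⟩ + μ({x})·‖y − x‖) + τ·t²·‖y − x‖². Consequently f is τ-convex on B̄(a,ρ): the function x ↦ f(x) − τ·‖x‖² is convex on B̄(a,ρ). -/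
/-!
For each `q`, `s ↦ ‖x - q + s • (y - x)‖` is convex with right derivative at `0` equal to
`⟪y - x, (x - q) / ‖x - q‖⟫`, or `‖y - x‖` when `q = x`; integrating in `q` gives the inequality
without its quadratic term. The quadratic gain comes from the points `q` of the support that are
`ε`-far from the chord of `B̄(a, ρ)` through `x` and `y`: such a `q` sees the line under an angle of
sine at least `ε / (2√2 ρ)`, and as `‖x - q + s • (y - x)‖ ≤ 2ρ`, the norm is
`ε² / (16 ρ³)`-strongly convex along the segment. These points carry mass at least `η`. Convexity
of `f - τ‖·‖²` follows from the first-order inequality at `t = 1`, the atom term being nonnegative.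
-/

open MeasureTheory Metric Set
open scoped RealInnerProductSpace

/- Coordinates along a line at distance `d` from the centre of `B̄(0, ρ)`: the line meets the ball
in the chord `{τ | τ² + d² ≤ ρ²}`, `x` is the chord point at abscissa `σ`, and `q` has abscissa `s`
and distance `e` from the line, so that `q ∈ B̄(0, ρ)` forces `s² + (d - e)² ≤ ρ²`. -/
theorem sq_mul_le_of_chord {ρ ε d e σ s : ℝ} (hd : 0 ≤ d) (he : 0 ≤ e)
    (hσ : σ ^ 2 + d ^ 2 ≤ ρ ^ 2) (hs : s ^ 2 + (d - e) ^ 2 ≤ ρ ^ 2)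
    (hfar : ∀ τ : ℝ, τ ^ 2 + d ^ 2 ≤ ρ ^ 2 → ε ^ 2 ≤ (s - τ) ^ 2 + e ^ 2) :
    ε ^ 2 * ((s - σ) ^ 2 + e ^ 2) ≤ 8 * ρ ^ 2 * e ^ 2 := by
  wlog hs0 : 0 ≤ s generalizing σ s
  · have key := this (σ := -σ) (s := -s) (by simpa using hσ) (by simpa using hs)
      (fun τ hτ => by
        have := hfar (-τ) (by simpa using hτ)
        rwa [show (s - -τ) ^ 2 = (-s - τ) ^ 2 by ring] at this)
      (by linarith)
    rwa [show (-s - -σ) ^ 2 = (s - σ) ^ 2 by ring] at key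
  have hdiam : (s - σ) ^ 2 + e ^ 2 ≤ 4 * ρ ^ 2 := by
    nlinarith [sq_nonneg (s + σ), sq_nonneg (2 * d - e)]
  rcases le_or_gt (ε ^ 2) (2 * e ^ 2) with hε | hε
  · nlinarith [sq_nonneg ε, sq_nonneg e]
  set r := √(ρ ^ 2 - d ^ 2)
  have hr0 : 0 ≤ r := Real.sqrt_nonneg _
  have hr2 : r ^ 2 = ρ ^ 2 - d ^ 2 := Real.sq_sqrt (by nlinarith [sq_nonneg σ])
  have hσr : |σ| ≤ r := abs_le_of_sq_le_sq' (by linarith) hr0 |> abs_le.2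
  -- the foot of the perpendicular from the far point lies beyond the end `r` of the chord
  have hrs : r < s := by
    by_contra! h
    have := hfar s (by nlinarith [abs_le.1 hσr])
    nlinarith
  set g := s - r
  have hεg : ε ^ 2 ≤ g ^ 2 + e ^ 2 := hfar r (by linarith)
  have hgde : 2 * r * g + g ^ 2 + e ^ 2 ≤ 2 * d * e := by nlinarith
  have hsσ : (s - σ) ^ 2 ≤ (2 * r + g) ^ 2 := by
    have := abs_le.1 hσr
    nlinarith
  have hgr : g * (2 * r + g) ≤ 2 * d * e - e ^ 2 := by linarith
  have hεg2 : ε ^ 2 ≤ 2 * g ^ 2 := by linarith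
  have hg2 : g ^ 2 ≤ 2 * d * e - e ^ 2 := by nlinarith [mul_nonneg hr0 (sub_nonneg.2 hrs.le)]
  have h1 : ε ^ 2 * (s - σ) ^ 2 ≤ 2 * (2 * d * e - e ^ 2) ^ 2 :=
    calc ε ^ 2 * (s - σ) ^ 2 ≤ 2 * g ^ 2 * (2 * r + g) ^ 2 := by gcongr
      _ = 2 * (g * (2 * r + g)) ^ 2 := by ring
      _ ≤ 2 * (2 * d * e - e ^ 2) ^ 2 := by gcongr
  have h2 : ε ^ 2 * e ^ 2 ≤ 2 * (2 * d * e - e ^ 2) * e ^ 2 := by gcongr; linarith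
  have hdρ : d ^ 2 ≤ ρ ^ 2 := by nlinarith
  nlinarith [mul_nonneg (mul_nonneg hd he) (sq_nonneg e)]

section NormedSpace

variable {E : Type*} [NormedAddCommGroup E] [NormedSpace ℝ E]

theorem IsCompact.exists_forall_add_smul_mem_segment {K : Set E} (hK : IsCompact K) {x : E}
    (hx : x ∈ K) (w : E) :
    ∃ x₁ ∈ K, ∃ x₂ ∈ K, ∀ σ : ℝ, x + σ • w ∈ K → x + σ • w ∈ segment ℝ x₁ x₂ := by
  rcases eq_or_ne w 0 with rfl | hw
  · exact ⟨x, hx, x, hx, fun σ _ => by simp⟩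
  set S := (fun σ : ℝ => x + σ • w) ⁻¹' K
  have hS : IsCompact S :=
    ((Homeomorph.addLeft x).isClosedEmbedding.comp
      (isClosedEmbedding_smul_left hw)).isCompact_preimage hK
  have hS0 : S.Nonempty := ⟨0, by simpa [S] using hx⟩
  refine ⟨_, hS.sInf_mem hS0, _, hS.sSup_mem hS0, fun σ hσ => ?_⟩
  have hσ' : σ ∈ segment ℝ (sInf S) (sSup S) := by
    rw [segment_eq_Icc ((csInf_le hS.bddBelow hσ).trans (le_csSup hS.bddAbove hσ))]
    exact ⟨csInf_le hS.bddBelow hσ, le_csSup hS.bddAbove hσ⟩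
  have := mem_image_of_mem (AffineMap.lineMap x (x + w) : ℝ →ᵃ[ℝ] E) hσ'
  simpa [image_segment, AffineMap.lineMap_apply, add_comm] using this

theorem strongConvexOn_of_forall_add_le
    {s : Set E} {f : E → ℝ} {g : E → E →ₗ[ℝ] ℝ} {m : ℝ} (hs : Convex ℝ s)
    (h : ∀ x ∈ s, ∀ y ∈ s, f x + g x (y - x) + m / 2 * ‖y - x‖ ^ 2 ≤ f y) :
    StrongConvexOn s m f := by
  refine ⟨hs, fun x hx y hy a b ha hb hab => ?_⟩
  have hz := hs hx hy ha hb hab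
  have hxz : x - (a • x + b • y) = b • (x - y) := by
    rw [← sub_eq_of_eq_add hab.symm]; module
  have hyz : y - (a • x + b • y) = (-a) • (x - y) := by
    rw [← sub_eq_of_eq_add hab.symm]; module
  have h1 := h _ hz x hx
  have h2 := h _ hz y hy
  rw [hxz, map_smul, norm_smul, smul_eq_mul, Real.norm_eq_abs, mul_pow, sq_abs] at h1
  rw [hyz, map_smul, norm_smul, smul_eq_mul, Real.norm_eq_abs, mul_pow, sq_abs] at h2
  simp only [smul_eq_mul]
  have hb' : b = 1 - a := by linarith
  subst hb'
  nlinarith [mul_le_mul_of_nonneg_left h1 ha, mul_le_mul_of_nonneg_left h2 hb]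

end NormedSpace

section InnerProductSpace

variable {E : Type*} [NormedAddCommGroup E] [InnerProductSpace ℝ E]

theorem mul_norm_add_mul_inner_eq (u v : E) (t : ℝ) :
    ‖u‖ * (‖u‖ + t * ⟪v, ‖u‖⁻¹ • u⟫) = ⟪u + t • v, u⟫ := by
  rcases eq_or_ne u 0 with rfl | hu
  · simp
  rw [inner_add_left, real_inner_smul_left, real_inner_smul_right, real_inner_self_eq_norm_sq,
    real_inner_comm]
  field_simp

theorem norm_add_mul_inner_le_norm_add_smul (u v : E) (t : ℝ) :
    ‖u‖ + t * ⟪v, ‖u‖⁻¹ • u⟫ ≤ ‖u + t • v‖ := by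
  rcases eq_or_ne u 0 with rfl | hu
  · simp only [norm_zero, smul_zero, inner_zero_right, mul_zero, add_zero, zero_add]
    exact norm_nonneg _
  have hu' : 0 < ‖u‖ := norm_pos_iff.2 hu
  refine le_of_mul_le_mul_left ?_ hu'
  rw [mul_norm_add_mul_inner_eq, mul_comm]
  exact real_inner_le_norm _ _

theorem norm_add_mul_inner_add_le_norm_add_smul {u v : E} {t k R : ℝ} (hu : u ≠ 0) (hR0 : 0 < R)
    (hR : ‖u + t • v‖ ≤ R)
    (hk : k * (‖u‖ ^ 2 * ‖v‖ ^ 2) ≤ ‖u‖ ^ 2 * ‖v‖ ^ 2 - ⟪u, v⟫ ^ 2) :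
    ‖u‖ + t * ⟪v, ‖u‖⁻¹ • u⟫ + k / (2 * R) * t ^ 2 * ‖v‖ ^ 2 ≤ ‖u + t • v‖ := by
  set h := ‖u‖
  set N := ‖u + t • v‖
  set Δ := N - (h + t * ⟪v, h⁻¹ • u⟫)
  have hh : 0 < h := norm_pos_iff.2 hu
  have hΔ : 0 ≤ Δ := sub_nonneg.2 (norm_add_mul_inner_le_norm_add_smul u v t)
  have hI : h * (h + t * ⟪v, h⁻¹ • u⟫) = h ^ 2 + t * ⟪u, v⟫ := by
    rw [mul_norm_add_mul_inner_eq, inner_add_left, real_inner_smul_left,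
      real_inner_self_eq_norm_sq, real_inner_comm]
  have hN : N ^ 2 = h ^ 2 + 2 * t * ⟪u, v⟫ + t ^ 2 * ‖v‖ ^ 2 := by
    rw [norm_add_sq_real, real_inner_smul_right, norm_smul, Real.norm_eq_abs, mul_pow, sq_abs]
    ring
  -- `N²h² - ⟪u + tv, u⟫²` is `t²` times the Gram determinant of `u, v`, and at most `2Nh · hΔ`
  have hgram : t ^ 2 * (k * (h ^ 2 * ‖v‖ ^ 2)) ≤ 2 * N * h * (h * Δ) := by
    have hsplit : h ^ 2 + t * ⟪u, v⟫ = N * h - h * Δ := by rw [← hI]; ring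
    calc t ^ 2 * (k * (h ^ 2 * ‖v‖ ^ 2)) ≤ t ^ 2 * (h ^ 2 * ‖v‖ ^ 2 - ⟪u, v⟫ ^ 2) := by gcongr
      _ = N ^ 2 * h ^ 2 - (h ^ 2 + t * ⟪u, v⟫) ^ 2 := by rw [hN]; ring
      _ ≤ 2 * N * h * (h * Δ) := by rw [hsplit]; nlinarith [sq_nonneg (h * Δ)]
  have : k * t ^ 2 * ‖v‖ ^ 2 ≤ 2 * R * Δ := by
    have h2 : t ^ 2 * (k * (h ^ 2 * ‖v‖ ^ 2)) ≤ h ^ 2 * (2 * R * Δ) := by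
      calc _ ≤ 2 * N * h * (h * Δ) := hgram
        _ ≤ 2 * R * h * (h * Δ) := by gcongr
        _ = h ^ 2 * (2 * R * Δ) := by ring
    refine le_of_mul_le_mul_left ?_ (pow_pos hh 2)
    linarith
  have : k / (2 * R) * t ^ 2 * ‖v‖ ^ 2 ≤ Δ := by
    rw [div_mul_eq_mul_div, div_mul_eq_mul_div, div_le_iff₀ (by positivity)]
    linarith
  linarith

theorem norm_sq_eq_inner_sq_add_norm_sub_sq {w : E} (hw : ‖w‖ = 1) (u : E) :
    ‖u‖ ^ 2 = ⟪u, w⟫ ^ 2 + ‖u - ⟪u, w⟫ • w‖ ^ 2 := by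
  rw [norm_sub_sq_real, real_inner_smul_right, norm_smul, hw, Real.norm_eq_abs, mul_one, sq_abs]
  ring

theorem sq_mul_norm_sq_le_of_forall_le_dist {a x q w : E} {ρ ε : ℝ} (hw : ‖w‖ = 1)
    (hε : 0 ≤ ε) (hx : x ∈ closedBall a ρ) (hq : q ∈ closedBall a ρ)
    (hfar : ∀ σ : ℝ, x + σ • w ∈ closedBall a ρ → ε ≤ dist q (x + σ • w)) :
    ε ^ 2 * ‖x - q‖ ^ 2 ≤ 8 * ρ ^ 2 * (‖x - q‖ ^ 2 - ⟪x - q, w⟫ ^ 2) := by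
  have pyth := norm_sq_eq_inner_sq_add_norm_sub_sq hw
  have hww : ⟪w, w⟫ = 1 := by rw [real_inner_self_eq_norm_sq, hw, one_pow]
  -- coordinates of `a` and `q` along the line `x + ℝ w` and orthogonally to it
  set α := ⟪a - x, w⟫
  set s := ⟪q - x, w⟫
  set A := a - x - α • w
  set B := q - x - s • w
  have hball : ∀ p, p ∈ closedBall a ρ ↔ ‖p - a‖ ^ 2 ≤ ρ ^ 2 := fun p => by
    rw [mem_closedBall, dist_eq_norm, sq_le_sq₀ (norm_nonneg _) (dist_nonneg.trans hx)]
  have hA : ‖x - a‖ ^ 2 = α ^ 2 + ‖A‖ ^ 2 := by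
    rw [← norm_neg, neg_sub, pyth]
  have hqa : ‖q - a‖ ^ 2 = (s - α) ^ 2 + ‖B - A‖ ^ 2 := by
    have h1 : ⟪q - a, w⟫ = s - α := by rw [← inner_sub_left]; congr 1; abel
    have h2 : q - a - (s - α) • w = B - A := by simp only [A, B, sub_smul]; abel
    rw [pyth, h1, h2]
  have hline : ∀ σ : ℝ, ‖x + σ • w - a‖ ^ 2 = (σ - α) ^ 2 + ‖A‖ ^ 2 := fun σ => by
    have h1 : ⟪x + σ • w - a, w⟫ = σ - α := by
      rw [show x + σ • w - a = σ • w - (a - x) by abel, inner_sub_left, real_inner_smul_left, hww,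
        mul_one]
    have h2 : x + σ • w - a - (σ - α) • w = -A := by simp only [A, sub_smul]; abel
    rw [pyth, h1, h2, norm_neg]
  have hdist : ∀ σ : ℝ, dist q (x + σ • w) ^ 2 = (s - σ) ^ 2 + ‖B‖ ^ 2 := fun σ => by
    have h1 : ⟪q - (x + σ • w), w⟫ = s - σ := by
      rw [show q - (x + σ • w) = (q - x) - σ • w by abel, inner_sub_left, real_inner_smul_left,
        hww, mul_one]
    have h2 : q - (x + σ • w) - (s - σ) • w = B := by simp only [B, sub_smul]; abel
    rw [dist_eq_norm, pyth, h1, h2]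
  have hxq : ⟪x - q, w⟫ = -s := by rw [← neg_sub, inner_neg_left]
  have hxqB : ‖x - q‖ ^ 2 = s ^ 2 + ‖B‖ ^ 2 := by
    rw [pyth, hxq, show x - q - -s • w = -B by simp only [B, neg_smul]; abel, norm_neg, neg_sq]
  have hBA : (‖A‖ - ‖B‖) ^ 2 ≤ ‖B - A‖ ^ 2 := by
    rw [← sq_abs, norm_sub_rev B A]
    exact pow_le_pow_left₀ (abs_nonneg _) (abs_norm_sub_norm_le A B) 2
  have key := sq_mul_le_of_chord (ρ := ρ) (σ := -α) (s := s - α) (ε := ε) (norm_nonneg A)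
    (norm_nonneg B) (by rw [neg_sq, ← hA]; exact (hball x).1 hx)
    (by have := (hball q).1 hq; rw [hqa] at this; linarith)
    fun τ hτ => by
      have hmem : x + (α + τ) • w ∈ closedBall a ρ := by
        rwa [hball, hline, add_sub_cancel_left]
      calc ε ^ 2 ≤ dist q (x + (α + τ) • w) ^ 2 := pow_le_pow_left₀ hε (hfar _ hmem) 2
        _ = (s - α - τ) ^ 2 + ‖B‖ ^ 2 := by rw [hdist]; ring
  rw [hxqB, hxq, neg_sq, add_sub_cancel_left]
  simpa only [sub_neg_eq_add, sub_add_cancel] using key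

theorem norm_add_mul_inner_add_le_of_forall_le_dist {a x q v : E} {ρ ε t : ℝ} (hρ : 0 < ρ)
    (hε : 0 ≤ ε) (hx : x ∈ closedBall a ρ) (hxt : x + t • v ∈ closedBall a ρ)
    (hq : q ∈ closedBall a ρ) (hqx : q ≠ x)
    (hfar : ∀ σ : ℝ, x + σ • v ∈ closedBall a ρ → ε ≤ dist q (x + σ • v)) :
    ‖x - q‖ + t * ⟪v, ‖x - q‖⁻¹ • (x - q)⟫ + ε ^ 2 / (32 * ρ ^ 3) * t ^ 2 * ‖v‖ ^ 2 ≤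
      ‖x - q + t • v‖ := by
  rcases eq_or_ne v 0 with rfl | hv
  · simp
  set w := ‖v‖⁻¹ • v
  have hvw : v = ‖v‖ • w := by rw [smul_inv_smul₀ (norm_ne_zero_iff.2 hv)]
  have hline : ∀ σ : ℝ, x + σ • w = x + (σ * ‖v‖⁻¹) • v := fun σ => by rw [mul_smul]
  have hw : ‖w‖ = 1 := by simp [w, norm_smul, hv]
  have hsine := sq_mul_norm_sq_le_of_forall_le_dist hw hε hx hq
    fun σ hσ => by rw [hline] at hσ ⊢; exact hfar _ hσ
  have hgram : ε ^ 2 / (8 * ρ ^ 2) * (‖x - q‖ ^ 2 * ‖v‖ ^ 2) ≤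
      ‖x - q‖ ^ 2 * ‖v‖ ^ 2 - ⟪x - q, v⟫ ^ 2 := by
    have : ⟪x - q, v⟫ = ‖v‖ * ⟪x - q, w⟫ := by
      conv_lhs => rw [hvw]
      rw [real_inner_smul_right]
    rw [this, div_mul_eq_mul_div, div_le_iff₀ (by positivity)]
    nlinarith [sq_nonneg ‖v‖]
  have hR : ‖x - q + t • v‖ ≤ 2 * ρ := by
    rw [sub_add_eq_add_sub, ← dist_eq_norm, two_mul]
    exact (dist_triangle_right _ _ a).trans (add_le_add hxt hq)
  have := norm_add_mul_inner_add_le_norm_add_smul (sub_ne_zero.2 hqx.symm) (by positivity) hR hgram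
  convert this using 3
  field_simp
  ring

end InnerProductSpace

theorem integrable_norm_sub_of_ae_mem_ball {E : Type*} [SeminormedAddCommGroup E]
    [MeasurableSpace E] [OpensMeasurableSpace E] {μ : Measure E} [IsFiniteMeasure μ] {a : E} {ρ : ℝ}
    (hae : ∀ᵐ q ∂μ, q ∈ ball a ρ) (x : E) : Integrable (fun p => ‖x - p‖) μ :=
  Integrable.of_bound (continuous_const.sub continuous_id).norm.aestronglyMeasurable
    (‖x - a‖ + ρ) <| hae.mono fun q hq => by
    have : ‖a - q‖ ≤ ρ := by rw [← dist_eq_norm]; exact (mem_ball'.1 hq).le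
    rw [norm_norm]
    linarith [norm_sub_le_norm_sub_add_norm_sub x a q]

section Integral

variable {E : Type*} [NormedAddCommGroup E] [InnerProductSpace ℝ E] [CompleteSpace E]
  [MeasurableSpace E] [BorelSpace E] [SecondCountableTopology E] {μ : Measure E}

theorem integral_norm_sub_add_le_integral_norm_add_smul_sub [IsFiniteMeasure μ] {x v : E}
    {t c : ℝ} {G : Set E} (ht : 0 ≤ t) (hint : Integrable (fun p => ‖x - p‖) μ)
    (hG : MeasurableSet G) (hxG : x ∉ G)
    (hstrong : ∀ᵐ q ∂μ, q ∈ G → ‖x - q‖ + t * ⟪v, ‖x - q‖⁻¹ • (x - q)⟫ + c ≤ ‖x - q + t • v‖) :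
    ∫ p, ‖x - p‖ ∂μ + t * (⟪v, ∫ p in {x}ᶜ, ‖x - p‖⁻¹ • (x - p) ∂μ⟫ + μ.real {x} * ‖v‖) +
      c * μ.real G ≤ ∫ p, ‖x + t • v - p‖ ∂μ := by
  set e : E → E := fun p => ‖x - p‖⁻¹ • (x - p)
  have hsub : Measurable fun p : E => x - p := measurable_const.sub measurable_id
  have he : Integrable e μ := by
    refine Integrable.of_bound (hsub.norm.inv.smul hsub).aestronglyMeasurable 1
      (ae_of_all _ fun p => ?_)
    rcases eq_or_ne (x - p) 0 with h | h
    · simp [e, h]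
    · simp [e, norm_smul, h]
  have hinner : Integrable (fun p => ⟪v, e p⟫) μ := he.const_inner v
  have hH : ∫ p in {x}ᶜ, e p ∂μ = ∫ p, e p ∂μ :=
    setIntegral_eq_integral_of_forall_compl_eq_zero fun p hp => by
      simp only [mem_compl_iff, not_not, mem_singleton_iff] at hp; simp [e, hp]
  have hint' : Integrable (fun p => ‖x + t • v - p‖) μ := by
    have := ((integrable_norm_iff hsub.aestronglyMeasurable).1 hint).add
      (integrable_const (t • v))
    refine this.norm.congr (ae_of_all _ fun p => ?_)
    simp only [Pi.add_apply, sub_add_eq_add_sub]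
  set ψ : E → ℝ := fun p => ‖x - p‖ + t * ⟪v, e p⟫ +
    ({x} : Set E).indicator (fun _ => t * ‖v‖) p + G.indicator (fun _ => c) p
  have h0 : Integrable (fun p => ‖x - p‖ + t * ⟪v, e p⟫) μ := hint.add (hinner.const_mul t)
  have h1 : Integrable (fun p => ({x} : Set E).indicator (fun _ => t * ‖v‖) p) μ :=
    (integrable_const _).indicator (measurableSet_singleton x)
  have h2 : Integrable (fun p => G.indicator (fun _ => c) p) μ := (integrable_const c).indicator hG
  have h01 : Integrable (fun p => ‖x - p‖ + t * ⟪v, e p⟫ +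
      ({x} : Set E).indicator (fun _ => t * ‖v‖) p) μ := h0.add h1
  have hψ : ∫ p, ψ p ∂μ = ∫ p, ‖x - p‖ ∂μ + t * (⟪v, ∫ p in {x}ᶜ, e p ∂μ⟫ + μ.real {x} * ‖v‖) +
      c * μ.real G := by
    simp only [ψ]
    rw [integral_add h01 h2, integral_add h0 h1, integral_add hint (hinner.const_mul t),
      integral_const_mul, integral_indicator_const _ (measurableSet_singleton x),
      integral_indicator_const _ hG, hH, integral_inner he, smul_eq_mul, smul_eq_mul]
    ring
  rw [← hψ]
  refine integral_mono_ae (h01.add h2) hint' ?_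
  filter_upwards [hstrong] with q hq
  rcases eq_or_ne q x with rfl | hqx
  · simp [ψ, e, hxG, norm_smul, abs_of_nonneg ht]
  have hq1 : ({x} : Set E).indicator (fun _ => t * ‖v‖) q = 0 := by simp [hqx]
  simp only [ψ, e, hq1, add_zero, ← sub_add_eq_add_sub]
  by_cases hqG : q ∈ G
  · simpa [hqG] using hq hqG
  · simpa [hqG] using norm_add_mul_inner_le_norm_add_smul (x - q) v t

theorem integral_norm_sub_add_le_integral_norm_add_smul_sub_of_far [ProperSpace E]
    [IsProbabilityMeasure μ] {a x y : E} {ρ ε η t : ℝ} (hρ : 0 < ρ) (hε : 0 < ε) (hη : η ≤ 1)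
    (hae : ∀ᵐ q ∂μ, q ∈ ball a ρ)
    (hεη : ∀ x ∈ closedBall a ρ, ∀ y ∈ closedBall a ρ,
      μ {z | infDist z (segment ℝ x y) < ε} ≤ ENNReal.ofReal (1 - η))
    (hx : x ∈ closedBall a ρ) (hy : y ∈ closedBall a ρ) (ht : t ∈ Icc (0 : ℝ) 1) :
    ∫ p, ‖x - p‖ ∂μ + t * (⟪y - x, ∫ p in {x}ᶜ, ‖x - p‖⁻¹ • (x - p) ∂μ⟫ + μ.real {x} * ‖y - x‖) +
      ε ^ 2 * η / (32 * ρ ^ 3) * t ^ 2 * ‖y - x‖ ^ 2 ≤ ∫ p, ‖x + t • (y - x) - p‖ ∂μ := by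
  -- `G` avoids the `ε`-neighbourhood of the whole chord through `x` and `y`, not just of `[x, y]`:
  -- only then do the points of `G ∩ B(a, ρ)` see the line under an angle bounded below.
  obtain ⟨x₁, hx₁, x₂, hx₂, hchord⟩ :=
    (isCompact_closedBall a ρ).exists_forall_add_smul_mem_segment hx (y - x)
  set G := {q | ε ≤ infDist q (segment ℝ x₁ x₂)}
  have hG : MeasurableSet G :=
    (isClosed_le continuous_const (continuous_infDist_pt _)).measurableSet
  have hxG : x ∉ G := fun h => by
    have := infDist_zero_of_mem (hchord 0 (by simpa using hx))
    simp only [zero_smul, add_zero] at this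
    exact absurd (h.trans this.le) (not_le.2 hε)
  have hμG : η ≤ μ.real G := by
    have hGc : G = {q | infDist q (segment ℝ x₁ x₂) < ε}ᶜ := by ext; simp [G]
    rw [hGc, probReal_compl_eq_one_sub (measurableSet_lt (by fun_prop) measurable_const)]
    have := ENNReal.toReal_le_of_le_ofReal (by linarith) (hεη x₁ hx₁ x₂ hx₂)
    rw [← measureReal_def] at this
    linarith
  have hxt : x + t • (y - x) ∈ closedBall a ρ := (convex_closedBall a ρ).add_smul_sub_mem hx hy ht
  have hstrong := hae.mono fun q hq (hqG : q ∈ G) =>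
    norm_add_mul_inner_add_le_of_forall_le_dist hρ hε.le hx hxt (ball_subset_closedBall hq)
      (fun h => hxG (h ▸ hqG)) fun σ hσ => hqG.trans (infDist_le_dist_of_mem (hchord σ hσ))
  have hmain := integral_norm_sub_add_le_integral_norm_add_smul_sub ht.1
    (integrable_norm_sub_of_ae_mem_ball hae x) hG hxG hstrong
  have hηG : ε ^ 2 * η / (32 * ρ ^ 3) * t ^ 2 * ‖y - x‖ ^ 2 ≤
      ε ^ 2 / (32 * ρ ^ 3) * t ^ 2 * ‖y - x‖ ^ 2 * μ.real G :=
    calc _ = ε ^ 2 / (32 * ρ ^ 3) * t ^ 2 * ‖y - x‖ ^ 2 * η := by ring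
      _ ≤ _ := by gcongr
  linarith

end Integral

theorem stmt10_general {n : ℕ} (a : EuclideanSpace ℝ (Fin n)) (ρ : ℝ) (hρ : 0 < ρ)
    (μ : Measure (EuclideanSpace ℝ (Fin n))) [IsProbabilityMeasure μ]
    (hsupp : {x : EuclideanSpace ℝ (Fin n) | ∀ U ∈ nhds x, 0 < μ U} ⊆ ball a ρ)
    (f : EuclideanSpace ℝ (Fin n) → ℝ)
    (hf : ∀ x, f x = ∫ p, ‖x - p‖ ∂μ)
    (H : EuclideanSpace ℝ (Fin n) → EuclideanSpace ℝ (Fin n))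
    (hH : ∀ x, H x = ∫ p in ({x}ᶜ : Set (EuclideanSpace ℝ (Fin n))), ‖x - p‖⁻¹ • (x - p) ∂μ)
    (ε η : ℝ) (hε : ε ∈ Set.Ioo 0 ρ) (hη : η ∈ Set.Ioc (0 : ℝ) 1)
    (hεη : ∀ x ∈ closedBall a ρ, ∀ y ∈ closedBall a ρ,
      μ {z | infDist z (segment ℝ x y) < ε} ≤ ENNReal.ofReal (1 - η))
    (τ : ℝ) (hτ : τ = ε ^ 2 * η / (32 * ρ ^ 3)) :
    (∀ x ∈ closedBall a ρ, ∀ y ∈ closedBall a ρ, ∀ t ∈ Set.Icc (0 : ℝ) 1,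
      f (x + t • (y - x)) ≥
        f x + t * (⟪y - x, H x⟫ + (μ {x}).toReal * ‖y - x‖) + τ * t ^ 2 * ‖y - x‖ ^ 2) ∧
    ConvexOn ℝ (closedBall a ρ) (fun x => f x - τ * ‖x‖ ^ 2) := by
  have hae : ∀ᵐ q ∂μ, q ∈ ball a ρ := Filter.mem_of_superset Measure.support_mem_ae
    fun q hq => hsupp ((Measure.mem_support_iff_forall q).1 hq)
  have key : ∀ x ∈ closedBall a ρ, ∀ y ∈ closedBall a ρ, ∀ t ∈ Set.Icc (0 : ℝ) 1,
      f x + t * (⟪y - x, H x⟫ + (μ {x}).toReal * ‖y - x‖) + τ * t ^ 2 * ‖y - x‖ ^ 2 ≤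
        f (x + t • (y - x)) := fun x hx y hy t ht => by
    rw [hf, hf, hH, hτ]
    exact integral_norm_sub_add_le_integral_norm_add_smul_sub_of_far hρ hε.1 hη.2 hae hεη hx hy ht
  refine ⟨key, ?_⟩
  have hsc : StrongConvexOn (closedBall a ρ) (2 * τ) f :=
    strongConvexOn_of_forall_add_le (g := fun z => innerₛₗ ℝ (H z)) (convex_closedBall a ρ)
      fun x hx y hy => by
        have h1 := key x hx y hy 1 ⟨zero_le_one, le_rfl⟩
        have h2 : 0 ≤ (μ {x}).toReal * ‖y - x‖ := by positivity
        rw [one_smul, add_sub_cancel, one_mul, one_pow, mul_one] at h1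
        rw [innerₛₗ_apply_apply, real_inner_comm, mul_div_cancel_left₀ τ two_ne_zero]
        linarith
  have := strongConvexOn_iff_convex.1 hsc
  rwa [mul_div_cancel_left₀ τ two_ne_zero] at this

/-- Euclidean case of Theorem 3.6, strong convexity of `f`.
If `ε ∈ (0,ρ)`, `η ∈ (0,1]` are such that every `ε`-neighborhood of a segment with
endpoints in `B̄(a,ρ)` has measure at most `1 - η`, and `τ = ε²η/(32ρ³)`, then along
every segment in `B̄(a,ρ)` one has
`f(x + t(y-x)) ≥ f(x) + t·(⟪y-x, H x⟫ + μ{x}‖y-x‖) + τ t² ‖y-x‖²`,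
and consequently `x ↦ f(x) - τ‖x‖²` is convex on `B̄(a,ρ)`. -/
theorem stmt10 {n : ℕ} (hn : 1 ≤ n) (a : EuclideanSpace ℝ (Fin n)) (ρ : ℝ) (hρ : 0 < ρ)
    (μ : Measure (EuclideanSpace ℝ (Fin n))) [IsProbabilityMeasure μ]
    (hsupp : {x : EuclideanSpace ℝ (Fin n) | ∀ U ∈ nhds x, 0 < μ U} ⊆ ball a ρ)
    (f : EuclideanSpace ℝ (Fin n) → ℝ)
    (hf : ∀ x, f x = ∫ p, ‖x - p‖ ∂μ)
    (H : EuclideanSpace ℝ (Fin n) → EuclideanSpace ℝ (Fin n))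
    (hH : ∀ x, H x = ∫ p in ({x}ᶜ : Set (EuclideanSpace ℝ (Fin n))), ‖x - p‖⁻¹ • (x - p) ∂μ)
    (ε η : ℝ) (hε : ε ∈ Set.Ioo 0 ρ) (hη : η ∈ Set.Ioc (0 : ℝ) 1)
    (hεη : ∀ x ∈ closedBall a ρ, ∀ y ∈ closedBall a ρ,
      μ {z | infDist z (segment ℝ x y) < ε} ≤ ENNReal.ofReal (1 - η))
    (τ : ℝ) (hτ : τ = ε ^ 2 * η / (32 * ρ ^ 3)) :
    (∀ x ∈ closedBall a ρ, ∀ y ∈ closedBall a ρ, ∀ t ∈ Set.Icc (0 : ℝ) 1,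
      f (x + t • (y - x)) ≥
        f x + t * (⟪y - x, H x⟫ + (μ {x}).toReal * ‖y - x‖) + τ * t ^ 2 * ‖y - x‖ ^ 2) ∧
    ConvexOn ℝ (closedBall a ρ) (fun x => f x - τ * ‖x‖ ^ 2) :=
  stmt10_general a ρ hρ μ hsupp f hf H hH ε η hε hη hεη τ hτ
end

section
/- Let x ∈ B̄(a,ρ) with H(x) ≠ 0, let t > 0 and set x' = x − t·H(x)/‖H(x)‖. Then for every y ∈ B̄(a,ρ): ‖x' − y‖² ≤ ‖x − y‖² + t² + (2t/‖H(x)‖)·(f(y) − f(x)). In particular, taking infima over the median set, infDist(x', 𝔐_μ)² ≤ infDist(x, 𝔐_μ)² + t² + 2t·(f_* − f(x)). -/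
open MeasureTheory Metric RealInnerProductSpace

/-!
Every unit vector `(x - p)/‖x - p‖` is a subgradient at `x` of the convex function `‖· - p‖`,
so averaging over `p` shows that `H x` is a subgradient of `f` at `x`:
`f x - f y ≤ ⟪x - y, H x⟫`. Expanding `‖x' - y‖²` around `x - y` turns this into the
first inequality. For the second, apply the first at a point of `𝔐_μ` nearest to `x`, where
`f = f_*`, and use `‖H x‖ ≤ 1` together with `f_* ≤ f x`.
-/

theorem norm_inv_norm_smul_le_one {V : Type*} [NormedAddCommGroup V] [NormedSpace ℝ V] (v : V) :
    ‖‖v‖⁻¹ • v‖ ≤ 1 := by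
  rcases eq_or_ne v 0 with rfl | hv
  · simp
  · exact (norm_smul_inv_norm hv).le

section InnerProduct

variable {F : Type*} [NormedAddCommGroup F] [InnerProductSpace ℝ F]

theorem norm_sub_norm_le_inner_inv_norm_smul (v w : F) :
    ‖v‖ - ‖w‖ ≤ ⟪v - w, ‖v‖⁻¹ • v⟫ := by
  rcases eq_or_ne v 0 with rfl | hv
  · simp
  have hpos : 0 < ‖v‖ := norm_pos_iff.mpr hv
  have hcs : ⟪w, v⟫ ≤ ‖w‖ * ‖v‖ := real_inner_le_norm w v
  have hexpand : ⟪v - w, ‖v‖⁻¹ • v⟫ - (‖v‖ - ‖w‖) = ‖v‖⁻¹ * (‖w‖ * ‖v‖ - ⟪w, v⟫) := by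
    rw [real_inner_smul_right, inner_sub_left, real_inner_self_eq_norm_sq]
    field_simp
    ring
  rw [← sub_nonneg, hexpand]
  exact mul_nonneg (inv_nonneg.mpr hpos.le) (sub_nonneg.mpr hcs)

theorem norm_sub_sq_le_of_subgradient_step {x y g : F} {fx fy t : ℝ} (hg : g ≠ 0) (ht : 0 ≤ t)
    (hsub : fx - fy ≤ ⟪x - y, g⟫) :
    ‖x - (t / ‖g‖) • g - y‖ ^ 2 ≤ ‖x - y‖ ^ 2 + t ^ 2 + 2 * t / ‖g‖ * (fy - fx) := by
  have hg' : 0 < ‖g‖ := norm_pos_iff.mpr hg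
  have hnorm : ‖(t / ‖g‖) • g‖ = t := by
    rw [norm_smul, Real.norm_eq_abs, abs_of_nonneg (div_nonneg ht hg'.le),
      div_mul_cancel₀ _ hg'.ne']
  have hinner : t / ‖g‖ * (fx - fy) ≤ ⟪x - y, (t / ‖g‖) • g⟫ := by
    rw [real_inner_smul_right]
    exact mul_le_mul_of_nonneg_left hsub (div_nonneg ht hg'.le)
  rw [sub_right_comm, norm_sub_sq_real, hnorm]
  have : 2 * t / ‖g‖ * (fy - fx) = -(2 * (t / ‖g‖ * (fx - fy))) := by ring
  linarith

end InnerProduct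

theorem infDist_sq_le_of_forall_mem {X : Type*} [PseudoMetricSpace X] {M : Set X}
    (hM : IsCompact M) (hne : M.Nonempty) {x x' : X} {C : ℝ}
    (h : ∀ y ∈ M, dist x' y ^ 2 ≤ dist x y ^ 2 + C) :
    infDist x' M ^ 2 ≤ infDist x M ^ 2 + C := by
  obtain ⟨y, hyM, hy⟩ := hM.exists_infDist_eq_dist hne x
  calc infDist x' M ^ 2 ≤ dist x' y ^ 2 :=
        pow_le_pow_left₀ infDist_nonneg (infDist_le_dist_of_mem hyM) 2
    _ ≤ dist x y ^ 2 + C := h y hyM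
    _ = infDist x M ^ 2 + C := by rw [hy]

theorem isCompact_setOf_isMinOn {α β : Type*} [TopologicalSpace α] [T2Space α] [LinearOrder β]
    [TopologicalSpace β] [OrderClosedTopology β] {f : α → β} {K : Set α} (hK : IsCompact K)
    (hf : ContinuousOn f K) : IsCompact {y ∈ K | IsMinOn f K y} := by
  rcases K.eq_empty_or_nonempty with rfl | hne
  · simp
  obtain ⟨y₀, hy₀, hmin⟩ := hK.exists_isMinOn hne hf
  have hset : {y ∈ K | IsMinOn f K y} = K ∩ f ⁻¹' Set.Iic (f y₀) := by
    ext y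
    refine ⟨fun ⟨hy, hymin⟩ => ⟨hy, hymin hy₀⟩, fun ⟨hy, hle⟩ => ⟨hy, fun z hz => ?_⟩⟩
    exact le_trans hle (hmin hz)
  rw [hset]
  exact hK.of_isClosed_subset (hf.preimage_isClosed_of_isClosed hK.isClosed isClosed_Iic)
    Set.inter_subset_left

theorem IsMinOn.csInf_image_eq {α β : Type*} [ConditionallyCompleteLinearOrder β] {f : α → β}
    {K : Set α} {y : α} (hy : y ∈ K) (hmin : IsMinOn f K y) : sInf (f '' K) = f y := by
  rw [sInf_image', hmin.iInf_eq hy]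

section FiniteMeasure

variable {E : Type*} [NormedAddCommGroup E] [MeasurableSpace E] {μ : Measure E}
  [IsFiniteMeasure μ]

theorem continuous_integral_norm_sub (hint : ∀ z, Integrable (fun p => ‖z - p‖) μ) :
    Continuous fun z => ∫ p, ‖z - p‖ ∂μ := by
  refine (LipschitzWith.of_dist_le_mul (K := (μ Set.univ).toNNReal) fun z w => ?_).continuous
  rw [Real.dist_eq, ← integral_sub (hint z) (hint w), ← Real.norm_eq_abs, mul_comm]
  refine norm_integral_le_of_norm_le_const (ae_of_all _ fun p => ?_)
  simpa [dist_eq_norm] using abs_norm_sub_norm_le (z - p) (w - p)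

theorem integrable_norm_sub_of_ae_mem_ball_s12 [BorelSpace E] {a : E} {ρ : ℝ}
    (h : ∀ᵐ p ∂μ, p ∈ ball a ρ) (z : E) : Integrable (fun p => ‖z - p‖) μ := by
  refine Integrable.of_bound (continuous_const.sub continuous_id).norm.aestronglyMeasurable
    (‖z - a‖ + ρ) (h.mono fun p hp => ?_)
  rw [norm_norm, ← dist_eq_norm, ← dist_eq_norm]
  linarith [dist_triangle z a p, mem_ball'.mp hp]

variable [NormedSpace ℝ E]

theorem norm_integral_inv_norm_smul_sub_le_one [IsProbabilityMeasure μ] (x : E) :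
    ‖∫ p, ‖x - p‖⁻¹ • (x - p) ∂μ‖ ≤ 1 := by
  simpa using norm_integral_le_of_norm_le_const (μ := μ)
    (ae_of_all _ fun p => norm_inv_norm_smul_le_one (x - p))

theorem integrable_inv_norm_smul_sub [BorelSpace E] [SecondCountableTopology E] (x : E) :
    Integrable (fun p => ‖x - p‖⁻¹ • (x - p)) μ :=
  Integrable.of_bound (by fun_prop) 1 (ae_of_all _ fun p => norm_inv_norm_smul_le_one (x - p))

end FiniteMeasure

theorem integral_norm_sub_sub_le_inner {E : Type*} [NormedAddCommGroup E] [InnerProductSpace ℝ E]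
    [CompleteSpace E] [MeasurableSpace E] [BorelSpace E] [SecondCountableTopology E]
    {μ : Measure E} [IsFiniteMeasure μ] {x y : E} (hx : Integrable (fun p => ‖x - p‖) μ)
    (hy : Integrable (fun p => ‖y - p‖) μ) :
    ∫ p, ‖x - p‖ ∂μ - ∫ p, ‖y - p‖ ∂μ ≤ ⟪x - y, ∫ p, ‖x - p‖⁻¹ • (x - p) ∂μ⟫ := by
  rw [← integral_sub hx hy, ← integral_inner (integrable_inv_norm_smul_sub x)]
  refine integral_mono (hx.sub hy) ((integrable_inv_norm_smul_sub x).const_inner _) fun p => ?_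
  simpa using norm_sub_norm_le_inner_inv_norm_smul (x - p) (y - p)

theorem stmt12_general {n : ℕ} (a : EuclideanSpace ℝ (Fin n)) (ρ : ℝ)
    (μ : Measure (EuclideanSpace ℝ (Fin n))) [IsProbabilityMeasure μ]
    (hsupp : {x : EuclideanSpace ℝ (Fin n) | ∀ U ∈ nhds x, 0 < μ U} ⊆ ball a ρ)
    (f : EuclideanSpace ℝ (Fin n) → ℝ)
    (hf : ∀ x, f x = ∫ p, ‖x - p‖ ∂μ)
    (H : EuclideanSpace ℝ (Fin n) → EuclideanSpace ℝ (Fin n))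
    (hH : ∀ x, H x = ∫ p in ({x}ᶜ : Set (EuclideanSpace ℝ (Fin n))), ‖x - p‖⁻¹ • (x - p) ∂μ)
    (fstar : ℝ) (hfstar : fstar = sInf (f '' closedBall a ρ))
    (M : Set (EuclideanSpace ℝ (Fin n)))
    (hM : M = {y ∈ closedBall a ρ | IsMinOn f (closedBall a ρ) y})
    (x : EuclideanSpace ℝ (Fin n)) (hx : x ∈ closedBall a ρ) (hHx : H x ≠ 0)
    (t : ℝ) (ht : 0 < t)
    (x' : EuclideanSpace ℝ (Fin n)) (hx' : x' = x - (t / ‖H x‖) • H x) :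
    (∀ y ∈ closedBall a ρ,
      ‖x' - y‖ ^ 2 ≤ ‖x - y‖ ^ 2 + t ^ 2 + 2 * t / ‖H x‖ * (f y - f x)) ∧
    infDist x' M ^ 2 ≤ infDist x M ^ 2 + t ^ 2 + 2 * t * (fstar - f x) := by
  have hae : ∀ᵐ p ∂μ, p ∈ ball a ρ := Filter.mem_of_superset Measure.support_mem_ae
    fun p hp => hsupp ((Measure.mem_support_iff_forall p).mp hp)
  have hint := integrable_norm_sub_of_ae_mem_ball_s12 hae
  have hHx_eq : H x = ∫ p, ‖x - p‖⁻¹ • (x - p) ∂μ := by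
    rw [hH, setIntegral_eq_integral_of_forall_compl_eq_zero]
    intro p hp
    simp [sub_eq_zero.mpr (Set.notMem_compl_iff.mp hp).symm]
  have hstep : ∀ y, ‖x' - y‖ ^ 2 ≤ ‖x - y‖ ^ 2 + t ^ 2 + 2 * t / ‖H x‖ * (f y - f x) :=
    fun y => hx' ▸ norm_sub_sq_le_of_subgradient_step hHx ht.le
      (by rw [hf, hf, hHx_eq]; exact integral_norm_sub_sub_le_inner (hint x) (hint y))
  refine ⟨fun y _ => hstep y, ?_⟩
  have hcont : Continuous f := by
    simpa only [← funext hf] using continuous_integral_norm_sub hint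
  obtain ⟨y₀, hy₀, hmin⟩ := (isCompact_closedBall a ρ).exists_isMinOn ⟨x, hx⟩ hcont.continuousOn
  have hfstar_le : fstar ≤ f x := hfstar ▸ hmin.csInf_image_eq hy₀ ▸ hmin hx
  have hcoef : 2 * t ≤ 2 * t / ‖H x‖ := le_div_self (by positivity) (norm_pos_iff.mpr hHx)
    (hHx_eq ▸ norm_integral_inv_norm_smul_sub_le_one x)
  subst hM
  rw [add_assoc]
  refine infDist_sq_le_of_forall_mem (isCompact_setOf_isMinOn (isCompact_closedBall a ρ)
    hcont.continuousOn) ⟨y₀, hy₀, hmin⟩ fun y ⟨hy, hymin⟩ => ?_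
  have hfy : f y = fstar := by rw [hfstar, hymin.csInf_image_eq hy]
  have hy_step := hstep y
  rw [hfy] at hy_step
  rw [dist_eq_norm, dist_eq_norm]
  linarith [mul_le_mul_of_nonpos_right hcoef (sub_nonpos.mpr hfstar_le)]

/-- Euclidean case of Lemma 4.5, fundamental inequality.
For `x ∈ B̄(a,ρ)` with `H x ≠ 0`, `t > 0` and `x' = x - t·H(x)/‖H(x)‖`, one has
`‖x' - y‖² ≤ ‖x - y‖² + t² + (2t/‖H x‖)(f y - f x)` for every `y ∈ B̄(a,ρ)`, and
`infDist(x', 𝔐_μ)² ≤ infDist(x, 𝔐_μ)² + t² + 2t(f_* - f x)`. -/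
theorem stmt12 {n : ℕ} (hn : 1 ≤ n) (a : EuclideanSpace ℝ (Fin n)) (ρ : ℝ) (hρ : 0 < ρ)
    (μ : Measure (EuclideanSpace ℝ (Fin n))) [IsProbabilityMeasure μ]
    (hsupp : {x : EuclideanSpace ℝ (Fin n) | ∀ U ∈ nhds x, 0 < μ U} ⊆ ball a ρ)
    (f : EuclideanSpace ℝ (Fin n) → ℝ)
    (hf : ∀ x, f x = ∫ p, ‖x - p‖ ∂μ)
    (H : EuclideanSpace ℝ (Fin n) → EuclideanSpace ℝ (Fin n))
    (hH : ∀ x, H x = ∫ p in ({x}ᶜ : Set (EuclideanSpace ℝ (Fin n))), ‖x - p‖⁻¹ • (x - p) ∂μ)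
    (fstar : ℝ) (hfstar : fstar = sInf (f '' closedBall a ρ))
    (M : Set (EuclideanSpace ℝ (Fin n)))
    (hM : M = {y ∈ closedBall a ρ | IsMinOn f (closedBall a ρ) y})
    (x : EuclideanSpace ℝ (Fin n)) (hx : x ∈ closedBall a ρ) (hHx : H x ≠ 0)
    (t : ℝ) (ht : 0 < t)
    (x' : EuclideanSpace ℝ (Fin n)) (hx' : x' = x - (t / ‖H x‖) • H x) :
    (∀ y ∈ closedBall a ρ,
      ‖x' - y‖ ^ 2 ≤ ‖x - y‖ ^ 2 + t ^ 2 + 2 * t / ‖H x‖ * (f y - f x)) ∧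
    infDist x' M ^ 2 ≤ infDist x M ^ 2 + t ^ 2 + 2 * t * (fstar - f x) :=
  stmt12_general a ρ μ hsupp f hf H hH fstar hfstar M hM x hx hHx t ht x' hx'
end
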